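/- If P is a k-optimal path partition of an in-semicomplete digraph D, then there exists a partial k-coloring of D orthogonal to P (i.e., Berge's Conjecture holds for in-semicomplete digraphs). -/

import Mathlib

/-!
Colour every vertex by its depth, the number of vertices after it on its path. If for every
`i < k` the vertices of depth `i` are pairwise nonadjacent, the depth classes `0, …, k - 1` form a
partial `k`-colouring orthogonal to the partition.

Otherwise let `j` be the least bad level, with an arc `u → w` between the depth-`j` vertices of
two paths `p` and `q`. Cutting `p` and `q` below `u` and `w`, the heads `p₀ u w` and `q₀ w` are two
paths ending at `w`; since the in-neighbourhoods are semicomplete they merge into one path through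
all their vertices, which the tail of `q` continues, while the tail of `p` stays a path. This
changes no level below `j`, keeps the partition `k`-optimal and increases the sum of the squared
path lengths, so iterating ends with all levels `< k` stable. A colouring orthogonal to the new
partition that agrees with the depth below level `j` is orthogonal to the old one too: the two
pieces of `p` lie on different sides of level `j`.
-/

open scoped Classical

namespace DigraphPaper

variable {V : Type*} [Fintype V] [DecidableEq V]

/-- Vertices `u` and `v` are adjacent in the digraph with arc relation `A`. -/
def DAdj (A : V → V → Prop) (u v : V) : Prop := A u v ∨ A v u

/-- A set of vertices is stable if its vertices are pairwise nonadjacent. -/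
def DStable (A : V → V → Prop) (S : Set V) : Prop :=
  ∀ u ∈ S, ∀ v ∈ S, u ≠ v → ¬ DAdj A u v

/-- The in-neighborhood of every vertex induces a semicomplete digraph. -/
def InSemicomplete (A : V → V → Prop) : Prop :=
  ∀ v u w : V, A u v → A w v → u ≠ w → DAdj A u w

/-- The out-neighborhood of every vertex induces a semicomplete digraph. -/
def OutSemicomplete (A : V → V → Prop) : Prop :=
  ∀ v u w : V, A v u → A v w → u ≠ w → DAdj A u w

/-- A path: a nonempty list of distinct vertices with consecutive arcs. -/
def IsPath (A : V → V → Prop) (p : List V) : Prop :=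
  p ≠ [] ∧ p.Nodup ∧ p.Chain' A

/-- A collection of pairwise vertex-disjoint lists. -/
def PDisjoint (P : Finset (List V)) : Prop :=
  ∀ p ∈ P, ∀ q ∈ P, p ≠ q → ∀ x : V, x ∈ p → x ∉ q

/-- A path partition: vertex-disjoint paths covering all vertices. -/
def IsPathPartition (A : V → V → Prop) (P : Finset (List V)) : Prop :=
  (∀ p ∈ P, IsPath A p) ∧ PDisjoint P ∧ ∀ v : V, ∃ p ∈ P, v ∈ p

/-- The k-norm of a collection of paths. -/
def knorm (k : ℕ) (P : Finset (List V)) : ℕ := ∑ p ∈ P, min p.length k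

/-- The set of final vertices of the paths in `P`. -/
def pends (P : Finset (List V)) : Set V := {x | ∃ p ∈ P, p.getLast? = some x}

/-- A partial k-coloring: k pairwise disjoint stable sets. -/
def IsPartialKColoring (A : V → V → Prop) (k : ℕ) (C : Fin k → Finset V) : Prop :=
  (∀ i, DStable A (C i : Set V)) ∧ ∀ i j, i ≠ j → Disjoint (C i) (C j)

/-- Orthogonality of a partial k-coloring to a path partition:
each path meets `min |P| k` distinct color classes. -/
def OrthoPC (k : ℕ) (C : Fin k → Finset V) (P : Finset (List V)) : Prop :=
  ∀ p ∈ P, min p.length k ≤ (Finset.univ.filter fun i : Fin k => ∃ x ∈ p, x ∈ C i).card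

/-- A k-optimal path partition. -/
def KOptimal (A : V → V → Prop) (k : ℕ) (P : Finset (List V)) : Prop :=
  IsPathPartition A P ∧
    ∀ Q : Finset (List V), IsPathPartition A Q → knorm k P ≤ knorm k Q

/-- A k-pack: at most k vertex-disjoint paths. -/
def IsKPack (A : V → V → Prop) (k : ℕ) (P : Finset (List V)) : Prop :=
  P.card ≤ k ∧ (∀ p ∈ P, IsPath A p) ∧ PDisjoint P

/-- Weight of a k-pack: number of covered vertices. -/
def weight (P : Finset (List V)) : ℕ := ∑ p ∈ P, p.length

/-- The set of vertices covered by the paths of `P`. -/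
def cover (P : Finset (List V)) : Finset V := P.biUnion List.toFinset

/-- An optimal k-pack. -/
def OptimalKPack (A : V → V → Prop) (k : ℕ) (P : Finset (List V)) : Prop :=
  IsKPack A k P ∧ ∀ Q : Finset (List V), IsKPack A k Q → weight Q ≤ weight P

/-- A coloring: a partition of the vertex set into stable sets. -/
def IsColoring (A : V → V → Prop) (C : Finset (Finset V)) : Prop :=
  (∀ c ∈ C, DStable A (c : Set V)) ∧ (∀ c ∈ C, c.Nonempty) ∧
  (∀ c ∈ C, ∀ c' ∈ C, c ≠ c' → Disjoint c c') ∧ ∀ v : V, ∃ c ∈ C, v ∈ c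

/-- Orthogonality of a coloring to a k-pack:
each color class meets `min |C| k` distinct paths. -/
def OrthoCP (k : ℕ) (C : Finset (Finset V)) (P : Finset (List V)) : Prop :=
  ∀ c ∈ C, min c.card k ≤ (P.filter fun p => ∃ x ∈ c, x ∈ p).card

/-- π_k(D): minimum k-norm of a path partition. -/
noncomputable def pik (A : V → V → Prop) (k : ℕ) : ℕ :=
  sInf {n | ∃ P : Finset (List V), IsPathPartition A P ∧ knorm k P = n}

/-- α_k(D): maximum weight of a partial k-coloring. -/
noncomputable def alphak (A : V → V → Prop) (k : ℕ) : ℕ :=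
  sSup {n | ∃ C : Fin k → Finset V, IsPartialKColoring A k C ∧ ∑ i, (C i).card = n}

/-- π(D): minimum number of paths in a path partition. -/
noncomputable def piNum (A : V → V → Prop) : ℕ :=
  sInf {n | ∃ P : Finset (List V), IsPathPartition A P ∧ P.card = n}

/-- α(D): maximum size of a stable set. -/
noncomputable def alphaNum (A : V → V → Prop) : ℕ :=
  sSup {n | ∃ S : Finset V, DStable A (S : Set V) ∧ S.card = n}

/-- k-norm of a coloring. -/
def cnorm (k : ℕ) (C : Finset (Finset V)) : ℕ := ∑ c ∈ C, min c.card k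

/-- χ_k(D): minimum k-norm of a coloring. -/
noncomputable def chik (A : V → V → Prop) (k : ℕ) : ℕ :=
  sInf {n | ∃ C : Finset (Finset V), IsColoring A C ∧ cnorm k C = n}

/-- λ_k(D): maximum weight of a k-pack. -/
noncomputable def lamk (A : V → V → Prop) (k : ℕ) : ℕ :=
  sSup {n | ∃ P : Finset (List V), IsKPack A k P ∧ weight P = n}

end DigraphPaper

namespace DigraphPaper

section ListFromEnd

variable {α : Type*}

lemma _root_.List.getElem?_reverse_append_of_lt {l₁ l₂ : List α} {d : ℕ} (h : d < l₂.length) :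
    (l₁ ++ l₂).reverse[d]? = l₂.reverse[d]? := by
  rw [List.reverse_append, List.getElem?_append_left (by simpa using h)]

lemma _root_.List.getElem?_reverse_append_add (l₁ l₂ : List α) (d : ℕ) :
    (l₁ ++ l₂).reverse[d + l₂.length]? = l₁.reverse[d]? := by
  rw [List.reverse_append, List.getElem?_append_right (by simp)]
  simp

lemma _root_.List.exists_getElem?_reverse_eq {l : List α} {x : α} (h : x ∈ l) :
    ∃ d : ℕ, l.reverse[d]? = some x :=
  List.mem_iff_getElem?.1 (List.mem_reverse.2 h)

lemma _root_.List.mem_of_getElem?_reverse_eq {l : List α} {d : ℕ} {x : α}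
    (h : l.reverse[d]? = some x) : x ∈ l :=
  List.mem_reverse.1 (List.mem_of_getElem? h)

lemma _root_.List.lt_length_of_getElem?_reverse_eq {l : List α} {d : ℕ} {x : α}
    (h : l.reverse[d]? = some x) : d < l.length := by
  simpa using (List.getElem?_eq_some_iff.1 h).1

lemma _root_.List.Nodup.eq_of_getElem?_reverse_eq {l : List α} (hl : l.Nodup) {d e : ℕ} {x : α}
    (hd : l.reverse[d]? = some x) (he : l.reverse[e]? = some x) : d = e :=
  (List.getElem?_inj (by simpa using List.lt_length_of_getElem?_reverse_eq hd)
    (List.nodup_reverse.2 hl)).1 (hd.trans he.symm)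

lemma _root_.List.exists_eq_append_cons_of_getElem?_reverse_eq {l : List α} {d : ℕ} {x : α}
    (h : l.reverse[d]? = some x) : ∃ l₁ l₂, l = l₁ ++ x :: l₂ ∧ l₂.length = d := by
  obtain ⟨hd, hx⟩ := List.getElem?_eq_some_iff.1 h
  refine ⟨(l.reverse.drop (d + 1)).reverse, (l.reverse.take d).reverse, ?_,
    by simp at hd ⊢; omega⟩
  rw [← List.reverse_reverse l]
  conv_lhs => rw [← List.take_append_drop d l.reverse, ← List.getElem_cons_drop hd, hx]
  simp

end ListFromEnd

section Merge

variable {V : Type*} {A : V → V → Prop}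

lemma IsPath.left_of_append {l₁ l₂ : List V} (h : IsPath A (l₁ ++ l₂)) (h₁ : l₁ ≠ []) :
    IsPath A l₁ :=
  ⟨h₁, h.2.1.of_append_left, List.IsChain.left_of_append h.2.2⟩

lemma IsPath.concat {l : List V} {a b : V} (h : IsPath A (l ++ [a])) (hab : A a b)
    (hb : b ∉ l ++ [a]) : IsPath A (l ++ [a] ++ [b]) := by
  refine ⟨by simp, List.nodup_append.2 ⟨h.2.1, by simp, by grind⟩, ?_⟩
  exact List.IsChain.append h.2.2 (List.isChain_singleton b) (by simp [hab])

lemma IsPath.rel_of_concat {l : List V} {a b : V} (h : IsPath A (l ++ [a] ++ [b])) : A a b :=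
  (List.isChain_append.1 h.2.2).2.2 a (by simp) b (by simp)

/-- The in-neighbours of `w` preceding it on the two paths are adjacent, so one of them can be
moved onto the other path; repeat. -/
theorem exists_isPath_perm_of_inSemicomplete (hin : InSemicomplete A) {X Y : List V} {w : V}
    (hX : IsPath A (X ++ [w])) (hY : IsPath A (Y ++ [w])) (hXY : X.Disjoint Y) :
    ∃ Z, IsPath A (Z ++ [w]) ∧ Z.Perm (X ++ Y) := by
  rcases X.eq_nil_or_concat with rfl | ⟨X, x, rfl⟩
  · exact ⟨Y, hY, by simp⟩
  rcases Y.eq_nil_or_concat with rfl | ⟨Y, y, rfl⟩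
  · exact ⟨_, hX, by simp⟩
  simp only [List.concat_eq_append] at *
  have hwX : w ∉ X ++ [x] := fun h => (List.nodup_append.1 hX.2.1).2.2 w h w (by simp) rfl
  have hwY : w ∉ Y ++ [y] := fun h => (List.nodup_append.1 hY.2.1).2.2 w h w (by simp) rfl
  have hxy : x ≠ y := fun h => hXY (by simp : x ∈ X ++ [x]) (by simp [h])
  rcases hin w x y hX.rel_of_concat hY.rel_of_concat hxy with h | h
  · obtain ⟨Z, hZ, hperm⟩ := exists_isPath_perm_of_inSemicomplete hin
      ((hX.left_of_append (by simp)).concat h fun hy => hXY hy (by simp))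
      (hY.left_of_append (by simp)) (List.disjoint_append_right.1 hXY).1
    refine ⟨Z ++ [y], hZ.concat hY.rel_of_concat ?_, by simpa using hperm.append_right [y]⟩
    rw [(hperm.append_right [y]).mem_iff]
    simp_all
  · obtain ⟨Z, hZ, hperm⟩ := exists_isPath_perm_of_inSemicomplete hin
      ((hY.left_of_append (by simp)).concat h fun hx => hXY (by simp) hx)
      (hX.left_of_append (by simp)) (List.disjoint_append_right.1 hXY.symm).1
    refine ⟨Z ++ [x], hZ.concat hX.rel_of_concat ?_, ?_⟩
    · rw [(hperm.append_right [x]).mem_iff]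
      simp_all
    · exact (hperm.append_right [x]).trans
        (by rw [List.append_assoc]; exact List.perm_append_comm)
termination_by X.length + Y.length

lemma exists_isPath_splice (hin : InSemicomplete A) {p₀ ps q₀ qs : List V} {u w : V}
    (hp : IsPath A (p₀ ++ u :: ps)) (hq : IsPath A (q₀ ++ w :: qs))
    (hpq : (p₀ ++ u :: ps).Disjoint (q₀ ++ w :: qs)) (huw : A u w) :
    ∃ Z, IsPath A (Z ++ w :: qs) ∧ Z.Perm (p₀ ++ [u] ++ q₀) := by
  rw [List.append_cons p₀] at hp hpq
  rw [List.append_cons q₀] at hq hpq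
  have hX : IsPath A (p₀ ++ [u] ++ [w]) :=
    (hp.left_of_append (by simp)).concat huw fun hw => hpq (List.mem_append_left _ hw) (by simp)
  have hY : IsPath A (q₀ ++ [w]) := hq.left_of_append (by simp)
  obtain ⟨Z, hZ, hperm⟩ := exists_isPath_perm_of_inSemicomplete hin hX hY
    fun x hx hx' => hpq (List.mem_append_left _ hx) (by simp [hx'])
  refine ⟨Z, ⟨by simp, ?_, ?_⟩, hperm⟩
  · rw [(hperm.append_right _).nodup_iff, List.append_assoc, List.append_cons q₀]
    refine List.nodup_append.2 ⟨(hp.2.1.sublist (List.sublist_append_left _ _)), hq.2.1, ?_⟩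
    exact fun x hx y hy hxy => hpq (List.mem_append_left _ hx) (hxy ▸ hy)
  · rw [← List.singleton_append, ← List.append_assoc]
    exact hZ.2.2.append_overlap (hq.2.2.suffix (by simp)) (by simp)

end Merge

section Depth

variable {V : Type*} {A : V → V → Prop} {P : Finset (List V)}

/-- Depths are counted from the end of a path: its last vertex has depth `0`. -/
def HasDepth (P : Finset (List V)) (v : V) (d : ℕ) : Prop := ∃ q ∈ P, q.reverse[d]? = some v

lemma IsPathPartition.eq_of_mem (hP : IsPathPartition A P) {p q : List V} (hp : p ∈ P)
    (hq : q ∈ P) {v : V} (hvp : v ∈ p) (hvq : v ∈ q) : p = q := by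
  by_contra hpq
  exact hP.2.1 p hp q hq hpq v hvp hvq

lemma IsPathPartition.nil_notMem (hP : IsPathPartition A P) : [] ∉ P :=
  fun h => (hP.1 [] h).1 rfl

lemma IsPathPartition.nodup_append (hP : IsPathPartition A P) {p q : List V} (hp : p ∈ P)
    (hq : q ∈ P) (hpq : p ≠ q) : (p ++ q).Nodup :=
  List.nodup_append.2 ⟨(hP.1 p hp).2.1, (hP.1 q hq).2.1,
    fun x hxp _ hxq hxy => hP.2.1 p hp q hq hpq x hxp (hxy ▸ hxq)⟩

lemma IsPathPartition.getElem?_reverse_of_hasDepth (hP : IsPathPartition A P) {p : List V}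
    (hp : p ∈ P) {v : V} (hv : v ∈ p) {d : ℕ} (hd : HasDepth P v d) : p.reverse[d]? = some v := by
  obtain ⟨q, hq, hqd⟩ := hd
  rwa [hP.eq_of_mem hp hq hv (List.mem_of_getElem?_reverse_eq hqd)]

lemma IsPathPartition.hasDepth_unique (hP : IsPathPartition A P) {v : V} {d e : ℕ}
    (hd : HasDepth P v d) (he : HasDepth P v e) : d = e := by
  obtain ⟨q, hq, hqd⟩ := hd
  exact (hP.1 q hq).2.1.eq_of_getElem?_reverse_eq hqd
    (hP.getElem?_reverse_of_hasDepth hq (List.mem_of_getElem?_reverse_eq hqd) he)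

lemma IsPathPartition.exists_hasDepth (hP : IsPathPartition A P) (v : V) :
    ∃ d, HasDepth P v d := by
  obtain ⟨q, hq, hvq⟩ := hP.2.2 v
  obtain ⟨d, hd⟩ := List.exists_getElem?_reverse_eq hvq
  exact ⟨d, q, hq, hd⟩

lemma hasDepth_of_mem_right {l₁ l₂ : List V} (hl : l₁ ++ l₂ ∈ P) {v : V} (hv : v ∈ l₂) :
    ∃ d < l₂.length, HasDepth P v d := by
  obtain ⟨d, hd⟩ := List.exists_getElem?_reverse_eq hv
  refine ⟨d, List.lt_length_of_getElem?_reverse_eq hd, l₁ ++ l₂, hl, ?_⟩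
  rwa [List.getElem?_reverse_append_of_lt (List.lt_length_of_getElem?_reverse_eq hd)]

lemma hasDepth_of_mem_left {l₁ l₂ : List V} (hl : l₁ ++ l₂ ∈ P) {v : V} (hv : v ∈ l₁) :
    ∃ d ≥ l₂.length, HasDepth P v d := by
  obtain ⟨d, hd⟩ := List.exists_getElem?_reverse_eq hv
  exact ⟨d + l₂.length, by omega, l₁ ++ l₂, hl, by rwa [List.getElem?_reverse_append_add]⟩

lemma exists_arc_of_not_dStable {j : ℕ} (h : ¬ DStable A {v | HasDepth P v j}) :
    ∃ p ∈ P, ∃ q ∈ P, p ≠ q ∧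
      ∃ u w, p.reverse[j]? = some u ∧ q.reverse[j]? = some w ∧ A u w := by
  simp only [DStable, Set.mem_ofPred_eq, not_forall, not_not] at h
  obtain ⟨u, ⟨p, hp, hu⟩, w, ⟨q, hq, hw⟩, huw, hadj⟩ := h
  have hpq : p ≠ q := by
    rintro rfl
    exact huw (Option.some_inj.1 (hu.symm.trans hw))
  rcases hadj with h | h
  · exact ⟨p, hp, q, hq, hpq, u, w, hu, hw, h⟩
  · exact ⟨q, hq, p, hp, hpq.symm, w, u, hw, hu, h⟩

variable [DecidableEq V]

@[simp]
lemma hasDepth_insert {r : List V} {v : V} {d : ℕ} :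
    HasDepth (insert r P) v d ↔ r.reverse[d]? = some v ∨ HasDepth P v d := by
  simp [HasDepth]

@[simp]
lemma hasDepth_erase_nil {v : V} {d : ℕ} : HasDepth (P.erase []) v d ↔ HasDepth P v d := by
  simp only [HasDepth, Finset.mem_erase]
  constructor
  · rintro ⟨q, ⟨-, hq⟩, hd⟩
    exact ⟨q, hq, hd⟩
  · rintro ⟨q, hq, hd⟩
    exact ⟨q, ⟨by rintro rfl; simp at hd, hq⟩, hd⟩

end Depth

section Labeling

variable {V : Type*} {A : V → V → Prop} {k j : ℕ} {P P' : Finset (List V)} {c : V → ℕ}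

/-- The classes `{v | c v = i}`, `i < k`, form a partial `k`-colouring orthogonal to `P`; moreover
`c` equals the depth in `P` on vertices of depth `< j`, and is `≥ j` on the others. -/
structure IsOrthoLabeling (A : V → V → Prop) (k j : ℕ) (P : Finset (List V)) (c : V → ℕ) :
    Prop where
  dStable : ∀ i < k, DStable A {v | c v = i}
  injOn : ∀ p ∈ P, p.length ≤ k → Set.InjOn c {v | v ∈ p}
  lt : ∀ p ∈ P, p.length ≤ k → ∀ v ∈ p, c v < k
  surjOn : ∀ p ∈ P, k < p.length → ∀ i < k, ∃ v ∈ p, c v = i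
  min_eq : ∀ v d, HasDepth P v d → min (c v) j = min d j

lemma IsOrthoLabeling.of_succ (hc : IsOrthoLabeling A k (j + 1) P c) :
    IsOrthoLabeling A k j P c where
  __ := hc
  min_eq v d hd := by have := hc.min_eq v d hd; omega

lemma exists_isOrthoLabeling_of_dStable (hP : IsPathPartition A P)
    (hstable : ∀ i < k, DStable A {v | HasDepth P v i}) : ∃ c, IsOrthoLabeling A k j P c := by
  choose c hc using hP.exists_hasDepth
  have hc_iff : ∀ v d, c v = d ↔ HasDepth P v d :=
    fun v d => ⟨(· ▸ hc v), hP.hasDepth_unique (hc v)⟩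
  have hcp : ∀ p ∈ P, ∀ v ∈ p, p.reverse[c v]? = some v :=
    fun p hp v hv => hP.getElem?_reverse_of_hasDepth hp hv (hc v)
  refine ⟨c, fun i hi => ?_, fun p hp _ v hv v' hv' hvv' => ?_, fun p hp hpk v hv => ?_,
    fun p hp hpk i hik => ?_, fun v d hd => by rw [hP.hasDepth_unique (hc v) hd]⟩
  · simpa only [hc_iff] using hstable i hi
  · exact Option.some_inj.1 ((hcp p hp v hv).symm.trans (hvv' ▸ hcp p hp v' hv'))
  · exact (List.lt_length_of_getElem?_reverse_eq (hcp p hp v hv)).trans_le hpk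
  · obtain ⟨v, hv⟩ : ∃ v, p.reverse[i]? = some v :=
      ⟨_, List.getElem?_eq_getElem (by simp; omega)⟩
    exact ⟨v, List.mem_of_getElem?_reverse_eq hv, (hc_iff v i).2 ⟨p, hp, hv⟩⟩

lemma IsOrthoLabeling.of_refines (hc : IsOrthoLabeling A k j P' c) (hP : IsPathPartition A P)
    (hP' : IsPathPartition A P') (hdepth : ∀ v, ∀ d < j, HasDepth P' v d ↔ HasDepth P v d)
    (hlong : ∀ p ∈ P, k < p.length → p ∈ P')
    (hshort : ∀ p ∈ P, p.length ≤ k → ∀ v ∈ p, ∀ v' ∈ p,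
      (∃ r ∈ P', r.length ≤ k ∧ v ∈ r ∧ v' ∈ r) ∨
        ∃ d d', HasDepth P v d ∧ HasDepth P v' d' ∧ min d j ≠ min d' j) :
    IsOrthoLabeling A k j P c := by
  have min_eq : ∀ v d, HasDepth P v d → min (c v) j = min d j := by
    intro v d hd
    obtain ⟨d', hd'⟩ := hP'.exists_hasDepth v
    rw [hc.min_eq v d' hd']
    rcases lt_or_ge d' j with h' | h'
    · rw [hP.hasDepth_unique ((hdepth v d' h').1 hd') hd]
    rcases lt_or_ge d j with h | h
    · rw [hP'.hasDepth_unique hd' ((hdepth v d h).2 hd)]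
    · omega
  have hsame : ∀ p ∈ P, p.length ≤ k → ∀ v ∈ p, ∀ v' ∈ p, c v = c v' →
      ∃ r ∈ P', r.length ≤ k ∧ v ∈ r ∧ v' ∈ r := by
    intro p hp hpk v hv v' hv' hvv'
    refine (hshort p hp hpk v hv v' hv').resolve_right ?_
    rintro ⟨d, d', hd, hd', hne⟩
    exact hne (by rw [← min_eq v d hd, ← min_eq v' d' hd', hvv'])
  refine ⟨hc.dStable, fun p hp hpk v hv v' hv' hvv' => ?_, fun p hp hpk v hv => ?_,
    fun p hp hpk => hc.surjOn p (hlong p hp hpk) hpk, min_eq⟩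
  · obtain ⟨r, hr, hrk, hvr, hv'r⟩ := hsame p hp hpk v hv v' hv' hvv'
    exact hc.injOn r hr hrk hvr hv'r hvv'
  · obtain ⟨r, hr, hrk, hvr, -⟩ := hsame p hp hpk v hv v hv rfl
    exact hc.lt r hr hrk v hvr

lemma IsOrthoLabeling.isPartialKColoring [Fintype V] (hc : IsOrthoLabeling A k j P c) :
    IsPartialKColoring A k fun i => Finset.univ.filter (c · = i) :=
  ⟨fun i => by simpa using hc.dStable i i.2, fun _ _ hii' =>
    Finset.disjoint_filter.2 fun _ _ h h' => hii' (Fin.ext (h.symm.trans h'))⟩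

lemma IsOrthoLabeling.orthoPC [Fintype V] [DecidableEq V] (hc : IsOrthoLabeling A k j P c)
    (hP : IsPathPartition A P) :
    OrthoPC k (fun i => Finset.univ.filter (c · = i)) P := by
  intro p hp
  set S := Finset.univ.filter fun i : Fin k => ∃ x ∈ p, x ∈ Finset.univ.filter (c · = i)
  rcases le_or_gt p.length k with hpk | hpk
  · have hsub : p.toFinset.image c ⊆ S.image Fin.val := by
      intro y hy
      obtain ⟨v, hv, rfl⟩ := Finset.mem_image.1 hy
      rw [List.mem_toFinset] at hv
      exact Finset.mem_image.2 ⟨⟨c v, hc.lt p hp hpk v hv⟩, by simpa [S] using ⟨v, hv, rfl⟩, rfl⟩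
    calc min p.length k = p.toFinset.card := by
          rw [min_eq_left hpk, List.toFinset_card_of_nodup (hP.1 p hp).2.1]
      _ = (p.toFinset.image c).card :=
          (Finset.card_image_of_injOn fun v hv v' hv' => hc.injOn p hp hpk
            (List.mem_toFinset.1 hv) (List.mem_toFinset.1 hv')).symm
      _ ≤ (S.image Fin.val).card := Finset.card_le_card hsub
      _ ≤ S.card := Finset.card_image_le
  · have hS : S = Finset.univ := Finset.eq_univ_of_forall fun i => by
      simpa [S] using hc.surjOn p hp hpk i i.2
    simp [hS]

end Labeling

section Replace

variable {V : Type*} [DecidableEq V] {A : V → V → Prop} {P : Finset (List V)} {p q R S : List V}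

def replacePair (P : Finset (List V)) (p q R S : List V) : Finset (List V) :=
  (insert R (insert S ((P.erase p).erase q))).erase []

lemma mem_replacePair {r : List V} :
    r ∈ replacePair P p q R S ↔ r ≠ [] ∧ (r = R ∨ r = S ∨ r ∈ (P.erase p).erase q) := by
  simp [replacePair]

lemma IsPathPartition.notMem_of_mem_erase_erase (hP : IsPathPartition A P) (hp : p ∈ P)
    (hq : q ∈ P) {e : List V} (he : e ∈ (P.erase p).erase q) {x : V} (hx : x ∈ e) :
    x ∉ p ∧ x ∉ q := by
  simp only [Finset.mem_erase] at he
  exact ⟨hP.2.1 e he.2.2 p hp he.2.1 x hx, hP.2.1 e he.2.2 q hq he.1 x hx⟩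

lemma IsPathPartition.notMem_erase_erase (hP : IsPathPartition A P) (hp : p ∈ P) (hq : q ∈ P)
    {r : List V} (hr : r ≠ []) (hsub : ∀ x ∈ r, x ∈ p ∨ x ∈ q) : r ∉ (P.erase p).erase q := by
  intro h
  obtain ⟨x, hx⟩ := List.exists_mem_of_ne_nil r hr
  have := hP.notMem_of_mem_erase_erase hp hq h hx
  exact (hsub x hx).elim this.1 this.2

lemma mem_replacePair_of_ne (hP : IsPathPartition A P) {r : List V} (hr : r ∈ P)
    (hrp : r ≠ p) (hrq : r ≠ q) : r ∈ replacePair P p q R S :=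
  mem_replacePair.2 ⟨fun h => hP.nil_notMem (h ▸ hr), Or.inr (Or.inr (by simp [*]))⟩

lemma hasDepth_replacePair_iff (hp : p ∈ P) (hq : q ∈ P) (hpq : p ≠ q) {d : ℕ}
    (hR : R.reverse[d]? = q.reverse[d]?) (hS : S.reverse[d]? = p.reverse[d]?) (v : V) :
    HasDepth (replacePair P p q R S) v d ↔ HasDepth P v d := by
  conv_rhs =>
    rw [← Finset.insert_erase hp, ← Finset.insert_erase (Finset.mem_erase.2 ⟨hpq.symm, hq⟩)]
  simp only [replacePair, hasDepth_erase_nil, hasDepth_insert, hR, hS]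
  tauto

variable (hP : IsPathPartition A P) (hp : p ∈ P) (hq : q ∈ P) (hpq : p ≠ q)
  (hperm : (R ++ S).Perm (p ++ q))
include hP hp hq hpq hperm

lemma isPathPartition_replacePair (hR : IsPath A R) (hS : S ≠ [] → IsPath A S) :
    IsPathPartition A (replacePair P p q R S) := by
  have hnd : (R ++ S).Nodup := hperm.nodup_iff.2 (hP.nodup_append hp hq hpq)
  have hmem : ∀ x, x ∈ R ∨ x ∈ S ↔ x ∈ p ∨ x ∈ q := fun x => by
    simpa only [List.mem_append] using hperm.mem_iff (a := x)
  have hE : ∀ e ∈ (P.erase p).erase q, ∀ x ∈ e, x ∉ R ∧ x ∉ S := by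
    intro e he x hx
    have := hP.notMem_of_mem_erase_erase hp hq he hx
    have := hmem x
    tauto
  refine ⟨fun r hr => ?_, ?_, fun v => ?_⟩
  · obtain ⟨hr₀, rfl | rfl | hrE⟩ := mem_replacePair.1 hr
    · exact hR
    · exact hS hr₀
    · exact hP.1 r (Finset.mem_of_mem_erase (Finset.mem_of_mem_erase hrE))
  · rintro r₁ h₁ r₂ h₂ hne x hx₁ hx₂
    obtain ⟨-, rfl | rfl | hE₁⟩ := mem_replacePair.1 h₁ <;>
      obtain ⟨-, rfl | rfl | hE₂⟩ := mem_replacePair.1 h₂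
    · exact hne rfl
    · exact List.disjoint_of_nodup_append hnd hx₁ hx₂
    · exact (hE _ hE₂ x hx₂).1 hx₁
    · exact List.disjoint_of_nodup_append hnd hx₂ hx₁
    · exact hne rfl
    · exact (hE _ hE₂ x hx₂).2 hx₁
    · exact (hE _ hE₁ x hx₁).1 hx₂
    · exact (hE _ hE₁ x hx₁).2 hx₂
    · exact hP.2.1 r₁ (Finset.mem_of_mem_erase (Finset.mem_of_mem_erase hE₁))
        r₂ (Finset.mem_of_mem_erase (Finset.mem_of_mem_erase hE₂)) hne x hx₁ hx₂
  · obtain ⟨r, hr, hvr⟩ := hP.2.2 v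
    by_cases hrpq : r = p ∨ r = q
    · rcases (hmem v).2 (by rcases hrpq with rfl | rfl <;> simp [hvr]) with hv | hv
      · exact ⟨R, mem_replacePair.2 ⟨List.ne_nil_of_mem hv, Or.inl rfl⟩, hv⟩
      · exact ⟨S, mem_replacePair.2 ⟨List.ne_nil_of_mem hv, Or.inr (Or.inl rfl)⟩, hv⟩
    · push Not at hrpq
      exact ⟨r, mem_replacePair_of_ne hP hr hrpq.1 hrpq.2, hvr⟩

lemma sum_replacePair (hR : R ≠ []) (f : List V → ℕ) (hf : f [] = 0) :
    ∑ r ∈ replacePair P p q R S, f r + (f p + f q) = ∑ r ∈ P, f r + (f R + f S) := by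
  have hnd : (R ++ S).Nodup := hperm.nodup_iff.2 (hP.nodup_append hp hq hpq)
  have hsub : ∀ l, l ⊆ R ++ S → ∀ x ∈ l, x ∈ p ∨ x ∈ q := fun l hl x hx => by
    simpa using hperm.subset (hl hx)
  have hS : S ∉ (P.erase p).erase q := by
    rcases eq_or_ne S [] with rfl | hS
    · exact fun h => hP.nil_notMem (Finset.mem_of_mem_erase (Finset.mem_of_mem_erase h))
    · exact hP.notMem_erase_erase hp hq hS (hsub S (List.subset_append_right R S))
  have hRS : R ∉ insert S ((P.erase p).erase q) := by
    rw [Finset.mem_insert, not_or]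
    refine ⟨fun h => ?_, hP.notMem_erase_erase hp hq hR (hsub R (List.subset_append_left R S))⟩
    obtain ⟨x, hx⟩ := List.exists_mem_of_ne_nil R hR
    exact List.disjoint_of_nodup_append hnd hx (h ▸ hx)
  rw [replacePair, Finset.sum_erase _ hf, Finset.sum_insert hRS, Finset.sum_insert hS,
    ← Finset.add_sum_erase P f hp,
    ← Finset.add_sum_erase _ f (Finset.mem_erase.2 ⟨hpq.symm, hq⟩)]
  ring

end Replace

section Step

variable {V : Type*} [DecidableEq V] {A : V → V → Prop} {k : ℕ} {P : Finset (List V)}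

lemma IsPathPartition.sum_length_sq_le [Fintype V] (hP : IsPathPartition A P) :
    ∑ r ∈ P, r.length ^ 2 ≤ Fintype.card V ^ 2 := by
  have hdisj : (P : Set (List V)).PairwiseDisjoint List.toFinset := fun r hr s hs hrs =>
    Finset.disjoint_left.2 fun x hxr hxs =>
      hP.2.1 r hr s hs hrs x (List.mem_toFinset.1 hxr) (List.mem_toFinset.1 hxs)
  have hlen : ∑ r ∈ P, r.length ≤ Fintype.card V :=
    calc ∑ r ∈ P, r.length = ∑ r ∈ P, r.toFinset.card :=
          Finset.sum_congr rfl fun r hr => (List.toFinset_card_of_nodup (hP.1 r hr).2.1).symm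
      _ = (P.biUnion List.toFinset).card := (Finset.card_biUnion hdisj).symm
      _ ≤ Fintype.card V := Finset.card_le_univ _
  exact (Finset.sum_sq_le_sq_sum_of_nonneg fun _ _ => Nat.zero_le _).trans
    (Nat.pow_le_pow_left hlen 2)

lemma IsOrthoLabeling.of_replacePair {j : ℕ} {p q R p₁ ps : List V} {c : V → ℕ}
    (hc : IsOrthoLabeling A k j (replacePair P p q R ps) c) (hP : IsPathPartition A P)
    (hP' : IsPathPartition A (replacePair P p q R ps))
    (hdepth : ∀ v, ∀ d < j, HasDepth (replacePair P p q R ps) v d ↔ HasDepth P v d)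
    (hp_eq : p = p₁ ++ ps) (hps : ps.length = j) (hpk : p.length ≤ k) (hqk : q.length ≤ k)
    (hR : R ≠ []) (hRk : R.length ≤ k) (hsubR : ∀ x, x ∈ p₁ ∨ x ∈ q → x ∈ R) :
    IsOrthoLabeling A k j P c := by
  refine hc.of_refines hP hP' hdepth (fun r hr hrk => ?_) (fun r hr hrk v hv v' hv' => ?_)
  · exact mem_replacePair_of_ne hP hr (by rintro rfl; omega) (by rintro rfl; omega)
  have hRmem : R ∈ replacePair P p q R ps := mem_replacePair.2 ⟨hR, Or.inl rfl⟩
  rcases eq_or_ne r q with rfl | hrq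
  · exact Or.inl ⟨R, hRmem, hRk, hsubR v (Or.inr hv), hsubR v' (Or.inr hv')⟩
  rcases eq_or_ne r p with rfl | hrp
  · have hr' : p₁ ++ ps ∈ P := hp_eq ▸ hr
    have hpsk : ps.length ≤ k := by simp [hp_eq] at hpk; omega
    rw [hp_eq, List.mem_append] at hv hv'
    rcases hv with hv | hv <;> rcases hv' with hv' | hv'
    · exact Or.inl ⟨R, hRmem, hRk, hsubR v (Or.inl hv), hsubR v' (Or.inl hv')⟩
    · obtain ⟨d, hd, hvd⟩ := hasDepth_of_mem_left hr' hv
      obtain ⟨d', hd', hvd'⟩ := hasDepth_of_mem_right hr' hv'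
      exact Or.inr ⟨d, d', hvd, hvd', by omega⟩
    · obtain ⟨d, hd, hvd⟩ := hasDepth_of_mem_right hr' hv
      obtain ⟨d', hd', hvd'⟩ := hasDepth_of_mem_left hr' hv'
      exact Or.inr ⟨d, d', hvd, hvd', by omega⟩
    · exact Or.inl ⟨ps, mem_replacePair.2 ⟨List.ne_nil_of_mem hv, Or.inr (Or.inl rfl)⟩,
        hpsk, hv, hv'⟩
  · exact Or.inl ⟨r, mem_replacePair_of_ne hP hr hrp hrq, hrk, hv, hv'⟩

/-- Cut `p` and `q` just below `u` and `w`: the heads `p₀ u w` and `q₀ w` merge into one path,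
continued by the tail of `q`, while the tail of `p` becomes a path of its own. -/
theorem exists_merge_of_arc (hin : InSemicomplete A) (hP : KOptimal A k P) {p q : List V}
    (hp : p ∈ P) (hq : q ∈ P) (hpq : p ≠ q) {j : ℕ} (hjk : j < k) {u w : V}
    (hu : p.reverse[j]? = some u) (hw : q.reverse[j]? = some w) (huw : A u w) :
    ∃ P', KOptimal A k P' ∧ ∑ r ∈ P, r.length ^ 2 < ∑ r ∈ P', r.length ^ 2 ∧
      (∀ v, ∀ d < j, HasDepth P' v d ↔ HasDepth P v d) ∧
      ∀ c, IsOrthoLabeling A k j P' c → IsOrthoLabeling A k j P c := by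
  obtain ⟨p₀, ps, hp_eq, hps⟩ := List.exists_eq_append_cons_of_getElem?_reverse_eq hu
  obtain ⟨q₀, qs, hq_eq, hqs⟩ := List.exists_eq_append_cons_of_getElem?_reverse_eq hw
  have hpath : ∀ r ∈ P, IsPath A r := hP.1.1
  obtain ⟨Z, hR, hZ⟩ := exists_isPath_splice hin (hp_eq ▸ hpath p hp) (hq_eq ▸ hpath q hq)
    (fun x hxp hxq => hP.1.2.1 p hp q hq hpq x (hp_eq ▸ hxp) (hq_eq ▸ hxq)) huw
  set R := Z ++ w :: qs
  have hp_eq' : p = p₀ ++ [u] ++ ps := by rw [hp_eq, List.append_cons]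
  have hRperm : R.Perm (p₀ ++ [u] ++ q) := by
    rw [hq_eq, ← List.append_assoc]
    exact hZ.append_right _
  have hperm : (R ++ ps).Perm (p ++ q) := by
    rw [hp_eq', List.append_assoc _ ps]
    exact (hRperm.append_right ps).trans
      (by simpa using (List.perm_append_comm.cons u).append_left p₀)
  have hRlen : R.length = p₀.length + 1 + q.length := by simp [hRperm.length_eq]; omega
  have hplen : p.length = p₀.length + 1 + j := by simp [hp_eq', hps]; omega
  have hqlen : q.length = q₀.length + 1 + j := by simp [hq_eq, hqs]; omega
  set P' := replacePair P p q R ps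
  have hP' : IsPathPartition A P' := isPathPartition_replacePair hP.1 hp hq hpq hperm hR
    fun h => ⟨h, (hpath p hp).2.1.sublist (hp_eq' ▸ List.sublist_append_right _ _),
      (hpath p hp).2.2.suffix (hp_eq' ▸ List.suffix_append _ _)⟩
  have hnorm : knorm k P' + (min p.length k + min q.length k) =
      knorm k P + (min R.length k + min ps.length k) :=
    sum_replacePair hP.1 hp hq hpq hperm hR.1 (fun r => min r.length k) (by simp)
  have hsq : ∑ r ∈ P', r.length ^ 2 + (p.length ^ 2 + q.length ^ 2) =
      ∑ r ∈ P, r.length ^ 2 + (R.length ^ 2 + ps.length ^ 2) :=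
    sum_replacePair hP.1 hp hq hpq hperm hR.1 (fun r => r.length ^ 2) (by simp)
  have hopt : knorm k P ≤ knorm k P' := hP.2 P' hP'
  -- otherwise the new partition would have a smaller `k`-norm
  have hshort : p.length ≤ k ∧ q.length ≤ k ∧ R.length ≤ k := by omega
  have hdepth : ∀ v, ∀ d < j, HasDepth P' v d ↔ HasDepth P v d := fun v d hd =>
    hasDepth_replacePair_iff hp hq hpq
      (by rw [hq_eq, List.getElem?_reverse_append_of_lt (by simp; omega),
        List.getElem?_reverse_append_of_lt (by simp; omega)])
      (by rw [hp_eq', List.getElem?_reverse_append_of_lt (by omega)]) v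
  have hsubR : ∀ x, x ∈ p₀ ++ [u] ∨ x ∈ q → x ∈ R := fun x hx => by
    simpa [hRperm.mem_iff, or_assoc] using hx
  exact ⟨P', ⟨hP', fun Q hQ => le_trans (by omega) (hP.2 Q hQ)⟩,
    by rw [hRlen, hplen, hqlen, hps] at hsq; nlinarith, hdepth, fun c hc =>
      hc.of_replacePair hP.1 hP' hdepth hp_eq' hps hshort.1 hshort.2.1 hR.1 hshort.2.2 hsubR⟩

end Step

section Main

variable {V : Type*} [Fintype V] [DecidableEq V] {A : V → V → Prop} {k : ℕ}

theorem exists_isOrthoLabeling (hin : InSemicomplete A) (j : ℕ) (P : Finset (List V))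
    (hP : KOptimal A k P) (hstable : ∀ i < j, DStable A {v | HasDepth P v i}) :
    ∃ c, IsOrthoLabeling A k j P c := by
  by_cases hjk : j < k
  · by_cases hj : DStable A {v | HasDepth P v j}
    · obtain ⟨c, hc⟩ := exists_isOrthoLabeling hin (j + 1) P hP fun i hi => by
        rcases Nat.lt_succ_iff_lt_or_eq.1 hi with hi | rfl
        exacts [hstable i hi, hj]
      exact ⟨c, hc.of_succ⟩
    · obtain ⟨p, hp, q, hq, hpq, u, w, hu, hw, huw⟩ := exists_arc_of_not_dStable hj
      obtain ⟨P', hP', hsq, hdepth, htransfer⟩ :=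
        exists_merge_of_arc hin hP hp hq hpq hjk hu hw huw
      have hsq_le := hP'.1.sum_length_sq_le
      obtain ⟨c, hc⟩ := exists_isOrthoLabeling hin j P' hP' fun i hi => by
        simpa only [hdepth _ i hi] using hstable i hi
      exact ⟨c, htransfer c hc⟩
  · exact exists_isOrthoLabeling_of_dStable hP.1 fun i hi => hstable i (by omega)
termination_by (k - j, Fintype.card V ^ 2 - ∑ r ∈ P, r.length ^ 2)
decreasing_by
  · exact Prod.Lex.left _ _ (by omega)
  · exact Prod.Lex.right _ (by omega)

end Main

variable {V : Type*} [Fintype V] [DecidableEq V]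

theorem stmt4_general (A : V → V → Prop) (hin : InSemicomplete A)
    (k : ℕ) (P : Finset (List V)) (hP : KOptimal A k P) :
    ∃ C : Fin k → Finset V, IsPartialKColoring A k C ∧ OrthoPC k C P := by
  obtain ⟨c, hc⟩ := exists_isOrthoLabeling hin 0 P hP (by simp)
  exact ⟨_, hc.isPartialKColoring, hc.orthoPC hP.1⟩

/-- Berge's Conjecture for in-semicomplete digraphs. -/
theorem stmt4 (A : V → V → Prop) (hirr : Irreflexive A) (hin : InSemicomplete A)
    (k : ℕ) (hk : 0 < k) (P : Finset (List V)) (hP : KOptimal A k P) :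
    ∃ C : Fin k → Finset V, IsPartialKColoring A k C ∧ OrthoPC k C P :=
  stmt4_general A hin k P hP

end DigraphPaper
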